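/- If ⋀({(α)φ'} ∪ Ψ) ∈ Strat((p,α,p',Q∖Q_α,Q_α)^η_d, e) for the weak spectroscopy energy game G△, p →(α) p', and Q_α ⊆ Q, then the branching conjunction ⋀({(α)φ'} ∪ Ψ) distinguishes p from Q (with respect to ⟦·⟧^ε). -/
import Mathlib


open Classical

noncomputable section

namespace Spectroscopy

/-! ### Energies and declining energy games -/

/-- Energies: 8-dimensional vectors over `ℕ ∪ {∞}`, ordered componentwise. -/
abbrev Energy : Type := Fin 8 → ℕ∞

/-- The `i`-th unit vector. -/
def unitE (i : Fin 8) : Energy := fun k => if k = i then 1 else 0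

/-- The vector with value `v` at position `i` and `0` elsewhere. -/
def onlyAt (i : Fin 8) (v : ℕ∞) : Energy := fun k => if k = i then v else 0

/-- Components of energy updates: `-1`, `0`, or minimum selection `min_D`.
For the component at position `k`, `minWith D` selects the minimum over the
positions `{k} ∪ D`, so the requirement `k ∈ D` of the paper holds by
construction. -/
inductive UpdComp : Type
  | decr : UpdComp
  | zero : UpdComp
  | minWith (D : Finset (Fin 8)) : UpdComp
deriving DecidableEq

/-- Energy updates. -/
abbrev Update : Type := Fin 8 → UpdComp

/-- Partial application of an update to an energy (`none` when a component
would become negative). -/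
def upd (e : Energy) (u : Update) : Option Energy :=
  if ∀ k, u k = UpdComp.decr → e k ≠ 0 then
    some (fun k =>
      match u k with
      | UpdComp.decr => e k - 1
      | UpdComp.zero => e k
      | UpdComp.minWith D => (insert k D).inf e)
  else none

/-- A declining energy game: positions, a defender predicate (attacker
positions are the non-defender ones), and moves labeled with updates. -/
structure EGame (Pos : Type) where
  defender : Pos → Prop
  move : Pos → Update → Pos → Prop

/-- Attacker winning budgets `Win_a`: at an attacker position some move must
lead to an attacker-won position under the updated energy; at a defender
position every move must (be defined and) lead to an attacker-won position. -/
inductive EGame.Win {Pos : Type} (G : EGame Pos) : Pos → Energy → Prop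
  | attack {g : Pos} {u : Update} {g' : Pos} {e e' : Energy} :
      ¬ G.defender g → G.move g u g' → upd e u = some e' → G.Win g' e' →
      G.Win g e
  | defend {g : Pos} {e : Energy} :
      G.defender g →
      (∀ u g', G.move g u g' → upd e u ≠ none) →
      (∀ u g' e', G.move g u g' → upd e u = some e' → G.Win g' e') →
      G.Win g e

/-! ### Labeled transition systems with silent steps -/

section LTS

variable {Proc Act : Type}

/-- Weak internal steps `↠`: reflexive-transitive closure of `τ`-steps. -/
def Star (Tr : Proc → Act → Proc → Prop) (τ : Act) : Proc → Proc → Prop :=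
  Relation.ReflTransGen fun p p' => Tr p τ p'

/-- A process is stable if it has no `τ`-step. -/
def Stable (Tr : Proc → Act → Proc → Prop) (τ : Act) (p : Proc) : Prop :=
  ∀ p', ¬ Tr p τ p'

/-- Optional step `p →(α) p'`: a real `α`-step, or `α = τ` and `p = p'`. -/
def OptStep (Tr : Proc → Act → Proc → Prop) (τ : Act) (p : Proc) (α : Act) (p' : Proc) : Prop :=
  Tr p α p' ∨ (α = τ ∧ p = p')

/-- Lift of `→a` to sets. -/
def SetStep (Tr : Proc → Act → Proc → Prop) (Q : Set Proc) (a : Act) (Q' : Set Proc) : Prop :=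
  Q' = {q' | ∃ q ∈ Q, Tr q a q'}

/-- Lift of `↠` to sets. -/
def SetStar (Tr : Proc → Act → Proc → Prop) (τ : Act) (Q Q' : Set Proc) : Prop :=
  Q' = {q' | ∃ q ∈ Q, Star Tr τ q q'}

/-- Lift of `→(α)` to sets. -/
def SetOpt (Tr : Proc → Act → Proc → Prop) (τ : Act) (Q : Set Proc) (α : Act)
    (Q' : Set Proc) : Prop :=
  Q' = {q' | ∃ q ∈ Q, OptStep Tr τ q α q'}

end LTS

/-! ### The logic HML_srbb -/

mutual
/-- Formulas `φ` of HML_srbb: `⟨ε⟩χ` or immediate conjunctions `⋀Ψ`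
(conjunctions are indexed by an arbitrary type). `⊤` is the empty conjunction. -/
inductive Formula (Act : Type) (τ : Act) : Type 1
  | delayed : DFormula Act τ → Formula Act τ
  | conj : (I : Type) → (I → Conjunct Act τ) → Formula Act τ

/-- Delayed formulas `χ`: observations `⟨a⟩φ` (with `a ≠ τ`), standard
conjunctions `⋀Ψ`, stable conjunctions `⋀({¬⟨τ⟩⊤} ∪ Ψ)`, and branching
conjunctions `⋀({(α)φ} ∪ Ψ)`. -/
inductive DFormula (Act : Type) (τ : Act) : Type 1
  | obs : (a : Act) → a ≠ τ → Formula Act τ → DFormula Act τ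
  | conj : (I : Type) → (I → Conjunct Act τ) → DFormula Act τ
  | stableConj : (I : Type) → (I → Conjunct Act τ) → DFormula Act τ
  | branchConj : (α : Act) → Formula Act τ → (I : Type) → (I → Conjunct Act τ) → DFormula Act τ

/-- Conjuncts `ψ`: positive `⟨ε⟩χ` or negative `¬⟨ε⟩χ`. -/
inductive Conjunct (Act : Type) (τ : Act) : Type 1
  | pos : DFormula Act τ → Conjunct Act τ
  | neg : DFormula Act τ → Conjunct Act τ
end

section Semantics

variable {Proc Act : Type}

mutual
/-- Semantics `⟦φ⟧`. -/
def Sat (Tr : Proc → Act → Proc → Prop) (τ : Act) (p : Proc) : Formula Act τ → Prop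
  | .delayed χ => ∃ p', Star Tr τ p p' ∧ SatD Tr τ p' χ
  | .conj _ ps => ∀ i, SatC Tr τ p (ps i)

/-- Semantics `⟦χ⟧^ε` of delayed formulas. -/
def SatD (Tr : Proc → Act → Proc → Prop) (τ : Act) (p : Proc) : DFormula Act τ → Prop
  | .obs a _ φ => ∃ p', Tr p a p' ∧ Sat Tr τ p' φ
  | .conj _ ps => ∀ i, SatC Tr τ p (ps i)
  | .stableConj _ ps => Stable Tr τ p ∧ ∀ i, SatC Tr τ p (ps i)
  | .branchConj α φ _ ps =>
      (∃ p', OptStep Tr τ p α p' ∧ Sat Tr τ p' φ) ∧ ∀ i, SatC Tr τ p (ps i)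

/-- Semantics `⟦ψ⟧^∧` of conjuncts. -/
def SatC (Tr : Proc → Act → Proc → Prop) (τ : Act) (p : Proc) : Conjunct Act τ → Prop
  | .pos χ => ∃ p', Star Tr τ p p' ∧ SatD Tr τ p' χ
  | .neg χ => ¬ ∃ p', Star Tr τ p p' ∧ SatD Tr τ p' χ
end

/-- `φ` distinguishes `p` from the set `Q`. -/
def Distinguishes (Tr : Proc → Act → Proc → Prop) (τ : Act) (φ : Formula Act τ)
    (p : Proc) (Q : Set Proc) : Prop :=
  Sat Tr τ p φ ∧ ∀ q ∈ Q, ¬ Sat Tr τ q φ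

/-- The delayed formula `χ` distinguishes `p` from the set `Q` w.r.t. `⟦·⟧^ε`. -/
def DistinguishesD (Tr : Proc → Act → Proc → Prop) (τ : Act) (χ : DFormula Act τ)
    (p : Proc) (Q : Set Proc) : Prop :=
  SatD Tr τ p χ ∧ ∀ q ∈ Q, ¬ SatD Tr τ q χ

/-- The conjunct `ψ` distinguishes `p` from `q` w.r.t. `⟦·⟧^∧`. -/
def DistinguishesC (Tr : Proc → Act → Proc → Prop) (τ : Act) (ψ : Conjunct Act τ)
    (p q : Proc) : Prop :=
  SatC Tr τ p ψ ∧ ¬ SatC Tr τ q ψ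

/-- Stability-respecting branching bisimulations: symmetric relations with the
branching-bisimulation transfer property and the stability-respecting
property. -/
def IsSRBBisim (Tr : Proc → Act → Proc → Prop) (τ : Act) (R : Proc → Proc → Prop) : Prop :=
  Symmetric R ∧
  (∀ p q, R p q → ∀ α p', Tr p α p' →
    (α = τ ∧ R p' q) ∨
      ∃ q' q'', Star Tr τ q q' ∧ Tr q' α q'' ∧ R p q' ∧ R p' q'') ∧
  (∀ p q, R p q → Stable Tr τ p →
    ∃ q', Star Tr τ q q' ∧ Stable Tr τ q' ∧ R p q')

end Semantics

/-! ### Expressiveness prices -/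

section Expr

variable {Act : Type} {τ : Act}

mutual
/-- Expressiveness price `expr` of formulas. -/
def exprF : Formula Act τ → Energy
  | .delayed χ => exprE χ
  | .conj I ps => ⨆ _ : Nonempty I, ((unitE 4 + unitE 2) + ⨆ i, exprC (ps i))

/-- Expressiveness price `expr^ε` of delayed formulas. -/
def exprE : DFormula Act τ → Energy
  | .obs _ _ φ => unitE 0 + exprF φ
  | .conj I ps => ⨆ _ : Nonempty I, (unitE 2 + ⨆ i, exprC (ps i))
  | .stableConj _ ps => unitE 3 + ⨆ i, exprC (ps i)
  | .branchConj _ φ _ ps =>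
      (unitE 1 + unitE 2) +
        (((unitE 0 + exprF φ) ⊔ onlyAt 5 (1 + exprF φ 0)) ⊔ ⨆ i, exprC (ps i))

/-- Expressiveness price `expr^∧` of conjuncts. -/
def exprC : Conjunct Act τ → Energy
  | .pos χ => exprE χ ⊔ onlyAt 5 (exprE χ 0)
  | .neg χ => (unitE 7 + exprE χ) ⊔ onlyAt 6 (exprE χ 0)
end

end Expr

/-! ### The weak spectroscopy energy game -/

/-- Positions of the weak spectroscopy game. -/
inductive GPos (Proc Act : Type) : Type
  | att (p : Proc) (Q : Set Proc)                                 -- `[p,Q]_a`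
  | attD (p : Proc) (Q : Set Proc)                                -- `[p,Q]^ε_a`
  | attC (p q : Proc)                                             -- `[p,q]^∧_a`
  | attB (p : Proc) (Q : Set Proc)                                -- `[p,Q]^η_a`
  | defC (p : Proc) (Q : Set Proc)                                -- `(p,Q)_d`
  | defS (p : Proc) (Q : Set Proc)                                -- `(p,Q)^s_d`
  | defB (p : Proc) (α : Act) (p' : Proc) (Q Qa : Set Proc)       -- `(p,α,p',Q,Qa)^η_d`

/-- The zero update. -/
def zeroU : Update := fun _ => UpdComp.zero

/-- The update `-ê_i`. -/
def decU (i : Fin 8) : Update := fun k => if k = i then UpdComp.decr else UpdComp.zero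

/-- The update `(min_{1,6},0,0,0,0,0,0,0)`. -/
def minU16 : Update := fun k => if k = 0 then UpdComp.minWith {5} else UpdComp.zero

/-- The update `(min_{1,7},0,0,0,0,0,0,-1)`. -/
def minU17dec8 : Update := fun k =>
  if k = 0 then UpdComp.minWith {6} else if k = 7 then UpdComp.decr else UpdComp.zero

/-- The update `(0,-1,-1,0,0,0,0,0)`. -/
def dec23 : Update := fun k => if k = 1 ∨ k = 2 then UpdComp.decr else UpdComp.zero

/-- The update `(min_{1,6},-1,-1,0,0,0,0,0)`. -/
def minU16dec23 : Update := fun k =>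
  if k = 0 then UpdComp.minWith {5}
  else if k = 1 ∨ k = 2 then UpdComp.decr else UpdComp.zero

section Game

variable {Proc Act : Type}

/-- Moves of the weak spectroscopy game. -/
inductive GMove (Tr : Proc → Act → Proc → Prop) (τ : Act) :
    GPos Proc Act → Update → GPos Proc Act → Prop
  | delay {p : Proc} {Q Q' : Set Proc} :
      SetStar Tr τ Q Q' →
      GMove Tr τ (.att p Q) zeroU (.attD p Q')
  | procrastination {p p' : Proc} {Q : Set Proc} :
      Tr p τ p' → p ≠ p' →
      GMove Tr τ (.attD p Q) zeroU (.attD p' Q)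
  | observation {p p' : Proc} {a : Act} {Q Q' : Set Proc} :
      Tr p a p' → a ≠ τ → SetStep Tr Q a Q' →
      GMove Tr τ (.attD p Q) (decU 0) (.att p' Q')
  | finishing {p : Proc} :
      GMove Tr τ (.att p ∅) zeroU (.defC p ∅)
  | immediateConj {p : Proc} {Q : Set Proc} :
      Q ≠ ∅ →
      GMove Tr τ (.att p Q) (decU 4) (.defC p Q)
  | lateConj {p : Proc} {Q : Set Proc} :
      GMove Tr τ (.attD p Q) zeroU (.defC p Q)
  | conjAnswer {p q : Proc} {Q : Set Proc} :
      q ∈ Q →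
      GMove Tr τ (.defC p Q) (decU 2) (.attC p q)
  | posConjunct {p q : Proc} {Q : Set Proc} :
      SetStar Tr τ {q} Q →
      GMove Tr τ (.attC p q) minU16 (.attD p Q)
  | negConjunct {p q : Proc} {Q : Set Proc} :
      SetStar Tr τ {p} Q → p ≠ q →
      GMove Tr τ (.attC p q) minU17dec8 (.attD q Q)
  | stableConj {p : Proc} {Q : Set Proc} :
      Stable Tr τ p →
      GMove Tr τ (.attD p Q) zeroU (.defS p {q ∈ Q | Stable Tr τ q})
  | conjStableAnswer {p q : Proc} {Q : Set Proc} :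
      q ∈ Q →
      GMove Tr τ (.defS p Q) (decU 3) (.attC p q)
  | stableFinishing {p : Proc} :
      GMove Tr τ (.defS p ∅) (decU 3) (.defC p ∅)
  | branchConj {p p' : Proc} {α : Act} {Q Qa : Set Proc} :
      OptStep Tr τ p α p' → Qa ⊆ Q →
      GMove Tr τ (.attD p Q) zeroU (.defB p α p' (Q \ Qa) Qa)
  | branchAnswer {p p' q : Proc} {α : Act} {Q Qa : Set Proc} :
      q ∈ Q →
      GMove Tr τ (.defB p α p' Q Qa) dec23 (.attC p q)
  | branchObservation {p p' : Proc} {α : Act} {Q Qa Q' : Set Proc} :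
      SetOpt Tr τ Qa α Q' →
      GMove Tr τ (.defB p α p' Q Qa) minU16dec23 (.attB p' Q')
  | branchAccounting {p : Proc} {Q : Set Proc} :
      GMove Tr τ (.attB p Q) (decU 0) (.att p Q)

/-- Defender positions of the weak spectroscopy game. -/
def isDefender : GPos Proc Act → Prop
  | .defC _ _ => True
  | .defS _ _ => True
  | .defB _ _ _ _ _ => True
  | _ => False

/-- The weak spectroscopy energy game `G△`. -/
def specGame (Tr : Proc → Act → Proc → Prop) (τ : Act) : EGame (GPos Proc Act) where
  defender := isDefender
  move := GMove Tr τ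

end Game

/-! ### Strategy formulas -/

section Strat

variable {Proc Act : Type}

mutual
/-- Attacker strategy formulas (formula sort). -/
inductive StratF (Tr : Proc → Act → Proc → Prop) (τ : Act) :
    GPos Proc Act → Energy → Formula Act τ → Prop
  | delay {p : Proc} {Q Q' : Set Proc} {u : Update} {e e' : Energy} {χ : DFormula Act τ} :
      GMove Tr τ (.att p Q) u (.attD p Q') →
      upd e u = some e' →
      (specGame Tr τ).Win (.attD p Q') e' →
      StratD Tr τ (.attD p Q') e' χ →
      StratF Tr τ (.att p Q) e (.delayed χ)
  | immediateConj {p : Proc} {Q : Set Proc} {u : Update} {e e' : Energy}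
      {I : Type} {ps : I → Conjunct Act τ} :
      GMove Tr τ (.att p Q) u (.defC p Q) →
      upd e u = some e' →
      (specGame Tr τ).Win (.defC p Q) e' →
      StratD Tr τ (.defC p Q) e' (.conj I ps) →
      StratF Tr τ (.att p Q) e (.conj I ps)

/-- Attacker strategy formulas (delayed-formula sort). -/
inductive StratD (Tr : Proc → Act → Proc → Prop) (τ : Act) :
    GPos Proc Act → Energy → DFormula Act τ → Prop
  | procrastination {p p' : Proc} {Q : Set Proc} {u : Update} {e e' : Energy}
      {χ : DFormula Act τ} :
      GMove Tr τ (.attD p Q) u (.attD p' Q) →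
      upd e u = some e' →
      (specGame Tr τ).Win (.attD p' Q) e' →
      StratD Tr τ (.attD p' Q) e' χ →
      StratD Tr τ (.attD p Q) e χ
  | observation {p p' : Proc} {a : Act} {Q Q' : Set Proc} {u : Update} {e e' : Energy}
      {φ : Formula Act τ} (ha : a ≠ τ) :
      GMove Tr τ (.attD p Q) u (.att p' Q') →
      Tr p a p' → SetStep Tr Q a Q' →
      upd e u = some e' →
      (specGame Tr τ).Win (.att p' Q') e' →
      StratF Tr τ (.att p' Q') e' φ →
      StratD Tr τ (.attD p Q) e (.obs a ha φ)
  | lateConj {p : Proc} {Q : Set Proc} {u : Update} {e e' : Energy} {χ : DFormula Act τ} :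
      GMove Tr τ (.attD p Q) u (.defC p Q) →
      upd e u = some e' →
      (specGame Tr τ).Win (.defC p Q) e' →
      StratD Tr τ (.defC p Q) e' χ →
      StratD Tr τ (.attD p Q) e χ
  | stable {p : Proc} {Q Q' : Set Proc} {u : Update} {e e' : Energy} {χ : DFormula Act τ} :
      GMove Tr τ (.attD p Q) u (.defS p Q') →
      upd e u = some e' →
      (specGame Tr τ).Win (.defS p Q') e' →
      StratD Tr τ (.defS p Q') e' χ →
      StratD Tr τ (.attD p Q) e χ
  | branch {p p' : Proc} {α : Act} {Q Q' Qa : Set Proc} {u : Update} {e e' : Energy}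
      {χ : DFormula Act τ} :
      GMove Tr τ (.attD p Q) u (.defB p α p' Q' Qa) →
      upd e u = some e' →
      (specGame Tr τ).Win (.defB p α p' Q' Qa) e' →
      StratD Tr τ (.defB p α p' Q' Qa) e' χ →
      StratD Tr τ (.attD p Q) e χ
  | conj {p : Proc} {Q : Set Proc} {e : Energy}
      (us : {q // q ∈ Q} → Update) (es : {q // q ∈ Q} → Energy)
      (ψs : {q // q ∈ Q} → Conjunct Act τ) :
      (∀ qq : {q // q ∈ Q}, GMove Tr τ (.defC p Q) (us qq) (.attC p qq.1)) →
      (∀ qq : {q // q ∈ Q}, upd e (us qq) = some (es qq)) →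
      (∀ qq : {q // q ∈ Q}, (specGame Tr τ).Win (.attC p qq.1) (es qq)) →
      (∀ qq : {q // q ∈ Q}, StratC Tr τ (.attC p qq.1) (es qq) (ψs qq)) →
      StratD Tr τ (.defC p Q) e (.conj {q // q ∈ Q} ψs)
  | stableConj {p : Proc} {Q : Set Proc} {e : Energy}
      (hne : Q.Nonempty)
      (us : {q // q ∈ Q} → Update) (es : {q // q ∈ Q} → Energy)
      (ψs : {q // q ∈ Q} → Conjunct Act τ) :
      (∀ qq : {q // q ∈ Q}, GMove Tr τ (.defS p Q) (us qq) (.attC p qq.1)) →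
      (∀ qq : {q // q ∈ Q}, upd e (us qq) = some (es qq)) →
      (∀ qq : {q // q ∈ Q}, (specGame Tr τ).Win (.attC p qq.1) (es qq)) →
      (∀ qq : {q // q ∈ Q}, StratC Tr τ (.attC p qq.1) (es qq) (ψs qq)) →
      StratD Tr τ (.defS p Q) e (.stableConj {q // q ∈ Q} ψs)
  | stableFinish {p : Proc} {u : Update} {e e' : Energy} :
      GMove Tr τ (.defS p ∅) u (.defC p ∅) →
      upd e u = some e' →
      (specGame Tr τ).Win (.defC p (∅ : Set Proc)) e' →
      StratD Tr τ (.defS p ∅) e (.stableConj Empty fun x => x.elim)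
  | branchConj {p p' : Proc} {α : Act} {Q Qa Q' : Set Proc} {ua ua' : Update}
      {e e1 ea : Energy} {φa : Formula Act τ}
      (us : {q // q ∈ Q} → Update) (es : {q // q ∈ Q} → Energy)
      (ψs : {q // q ∈ Q} → Conjunct Act τ) :
      GMove Tr τ (.defB p α p' Q Qa) ua (.attB p' Q') →
      GMove Tr τ (.attB p' Q') ua' (.att p' Q') →
      upd e ua = some e1 →
      upd e1 ua' = some ea →
      (specGame Tr τ).Win (.att p' Q') ea →
      StratF Tr τ (.att p' Q') ea φa →
      (∀ qq : {q // q ∈ Q}, GMove Tr τ (.defB p α p' Q Qa) (us qq) (.attC p qq.1)) →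
      (∀ qq : {q // q ∈ Q}, upd e (us qq) = some (es qq)) →
      (∀ qq : {q // q ∈ Q}, (specGame Tr τ).Win (.attC p qq.1) (es qq)) →
      (∀ qq : {q // q ∈ Q}, StratC Tr τ (.attC p qq.1) (es qq) (ψs qq)) →
      StratD Tr τ (.defB p α p' Q Qa) e (.branchConj α φa {q // q ∈ Q} ψs)

/-- Attacker strategy formulas (conjunct sort). -/
inductive StratC (Tr : Proc → Act → Proc → Prop) (τ : Act) :
    GPos Proc Act → Energy → Conjunct Act τ → Prop
  | pos {p q : Proc} {Q' : Set Proc} {u : Update} {e e' : Energy} {χ : DFormula Act τ} :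
      GMove Tr τ (.attC p q) u (.attD p Q') →
      upd e u = some e' →
      (specGame Tr τ).Win (.attD p Q') e' →
      StratD Tr τ (.attD p Q') e' χ →
      StratC Tr τ (.attC p q) e (.pos χ)
  | neg {p q : Proc} {P' : Set Proc} {u : Update} {e e' : Energy} {χ : DFormula Act τ} :
      GMove Tr τ (.attC p q) u (.attD q P') →
      upd e u = some e' →
      (specGame Tr τ).Win (.attD q P') e' →
      StratD Tr τ (.attD q P') e' χ →
      StratC Tr τ (.attC p q) e (.neg χ)
end

end Strat



/-! ### Auxiliary correctness lemmas -/

section Correctness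

variable {Proc Act : Type} {Tr : Proc → Act → Proc → Prop} {τ : Act}

/-- τ-closures are τ-closed. -/
lemma setStar_closed {Q Q' : Set Proc} (h : SetStar Tr τ Q Q') : SetStar Tr τ Q' Q' := by
  subst h
  ext r
  constructor
  · intro hr
    exact ⟨r, hr, Relation.ReflTransGen.refl⟩
  · rintro ⟨q', ⟨q, hq, h1⟩, h2⟩
    exact ⟨q, hq, h1.trans h2⟩

/-- Motive for formula positions. -/
def MF (Tr : Proc → Act → Proc → Prop) (τ : Act) (g : GPos Proc Act) (φ : Formula Act τ) : Prop :=
  ∀ p Q, g = .att p Q → Sat Tr τ p φ ∧ ∀ q ∈ Q, ¬ Sat Tr τ q φ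

/-- Motive for delayed-formula positions. -/
def MD (Tr : Proc → Act → Proc → Prop) (τ : Act) (g : GPos Proc Act) (χ : DFormula Act τ) : Prop :=
  (∀ p Q, g = .attD p Q → SetStar Tr τ Q Q →
     (∃ p'', Star Tr τ p p'' ∧ SatD Tr τ p'' χ) ∧ ∀ q ∈ Q, ¬ SatD Tr τ q χ) ∧
  (∀ p Q, g = .defC p Q → SatD Tr τ p χ ∧ ∀ q ∈ Q, ¬ SatD Tr τ q χ) ∧
  (∀ p Q, g = .defS p Q → Stable Tr τ p →
     SatD Tr τ p χ ∧ (∀ q, ¬ Stable Tr τ q → ¬ SatD Tr τ q χ) ∧ ∀ q ∈ Q, ¬ SatD Tr τ q χ) ∧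
  (∀ p α p' Q' Qa, g = .defB p α p' Q' Qa → OptStep Tr τ p α p' →
     SatD Tr τ p χ ∧ (∀ q ∈ Q', ¬ SatD Tr τ q χ) ∧ ∀ q ∈ Qa, ¬ SatD Tr τ q χ)

/-- Motive for conjunct positions. -/
def MC (Tr : Proc → Act → Proc → Prop) (τ : Act) (g : GPos Proc Act) (ψ : Conjunct Act τ) : Prop :=
  ∀ p q, g = .attC p q → SatC Tr τ p ψ ∧ ¬ SatC Tr τ q ψ

lemma strat_correct {g : GPos Proc Act} {e : Energy} {χ : DFormula Act τ}
    (h : StratD Tr τ g e χ) : MD Tr τ g χ := by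
  refine StratD.rec (motive_1 := fun g _ φ _ => MF Tr τ g φ)
    (motive_2 := fun g _ χ _ => MD Tr τ g χ)
    (motive_3 := fun g _ ψ _ => MC Tr τ g ψ)
    ?_ ?_ ?_ ?_ ?_ ?_ ?_ ?_ ?_ ?_ ?_ ?_ ?_ h
  -- StratF.delay
  · intro p Q Q' u e e' χ hm _ _ _ IH p0 Q0 heq
    cases heq
    cases hm with
    | delay hQQ' =>
      obtain ⟨⟨p'', h1, h2⟩, hneg⟩ := IH.1 p Q' rfl (setStar_closed hQQ')
      constructor
      · exact ⟨p'', h1, h2⟩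
      · rintro q hq ⟨q', hs, hd⟩
        exact hneg q' (hQQ' ▸ ⟨q, hq, hs⟩) hd
  -- StratF.immediateConj
  · intro p Q u e e' I ps hm _ _ _ IH p0 Q0 heq
    cases heq
    obtain ⟨h1, h2⟩ := IH.2.1 p Q rfl
    exact ⟨h1, h2⟩
  -- StratD.procrastination
  · intro p p' Q u e e' χ hm _ _ _ IH
    refine ⟨?_, ?_, ?_, ?_⟩
    · intro p0 Q0 heq hclosed
      cases heq
      cases hm with
      | procrastination htr hne =>
        obtain ⟨⟨p'', h1, h2⟩, hneg⟩ := IH.1 p' Q rfl hclosed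
        exact ⟨⟨p'', Relation.ReflTransGen.head htr h1, h2⟩, hneg⟩
    · intro _ _ heq; cases heq
    · intro _ _ heq; cases heq
    · intro _ _ _ _ _ heq; cases heq
  -- StratD.observation
  · intro p p' a Q Q' u e e' φ ha hm htr hset _ _ _ IH
    refine ⟨?_, ?_, ?_, ?_⟩
    · intro p0 Q0 heq _
      cases heq
      obtain ⟨h1, h2⟩ := IH p' Q' rfl
      constructor
      · exact ⟨p, Relation.ReflTransGen.refl, ⟨p', htr, h1⟩⟩
      · rintro q hq ⟨q', hs, hd⟩
        exact h2 q' (hset ▸ ⟨q, hq, hs⟩) hd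
    · intro _ _ heq; cases heq
    · intro _ _ heq; cases heq
    · intro _ _ _ _ _ heq; cases heq
  -- StratD.lateConj
  · intro p Q u e e' χ hm _ _ _ IH
    refine ⟨?_, ?_, ?_, ?_⟩
    · intro p0 Q0 heq _
      cases heq
      obtain ⟨h1, h2⟩ := IH.2.1 p Q rfl
      exact ⟨⟨p, Relation.ReflTransGen.refl, h1⟩, h2⟩
    · intro _ _ heq; cases heq
    · intro _ _ heq; cases heq
    · intro _ _ _ _ _ heq; cases heq
  -- StratD.stable
  · intro p Q Q' u e e' χ hm _ _ _ IH
    refine ⟨?_, ?_, ?_, ?_⟩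
    · intro p0 Q0 heq _
      cases heq
      cases hm with
      | stableConj hst =>
        obtain ⟨h1, h2, h3⟩ := IH.2.2.1 p _ rfl hst
        refine ⟨⟨p, Relation.ReflTransGen.refl, h1⟩, ?_⟩
        intro q hq hd
        by_cases hs : Stable Tr τ q
        · exact h3 q ⟨hq, hs⟩ hd
        · exact h2 q hs hd
    · intro _ _ heq; cases heq
    · intro _ _ heq; cases heq
    · intro _ _ _ _ _ heq; cases heq
  -- StratD.branch
  · intro p p' α Q Q' Qa u e e' χ hm _ _ _ IH
    refine ⟨?_, ?_, ?_, ?_⟩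
    · intro p0 Q0 heq _
      cases heq
      cases hm with
      | branchConj hopt hsub =>
        obtain ⟨h1, h2, h3⟩ := IH.2.2.2 p α p' _ Qa rfl hopt
        refine ⟨⟨p, Relation.ReflTransGen.refl, h1⟩, ?_⟩
        intro q hq hd
        by_cases hqa : q ∈ Qa
        · exact h3 q hqa hd
        · exact h2 q ⟨hq, hqa⟩ hd
    · intro _ _ heq; cases heq
    · intro _ _ heq; cases heq
    · intro _ _ _ _ _ heq; cases heq
  -- StratD.conj
  · intro p Q e us es ψs hms _ _ _ IHs
    refine ⟨?_, ?_, ?_, ?_⟩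
    · intro _ _ heq; cases heq
    · intro p0 Q0 heq
      cases heq
      constructor
      · intro qq
        exact (IHs qq p qq.1 rfl).1
      · intro q hq hd
        exact (IHs ⟨q, hq⟩ p q rfl).2 (hd ⟨q, hq⟩)
    · intro _ _ heq; cases heq
    · intro _ _ _ _ _ heq; cases heq
  -- StratD.stableConj
  · intro p Q e hne us es ψs hms _ _ _ IHs
    refine ⟨?_, ?_, ?_, ?_⟩
    · intro _ _ heq; cases heq
    · intro _ _ heq; cases heq
    · intro p0 Q0 heq hstab
      cases heq
      refine ⟨⟨hstab, fun qq => (IHs qq p qq.1 rfl).1⟩, ?_, ?_⟩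
      · intro q hq hd
        exact hq hd.1
      · intro q hq hd
        exact (IHs ⟨q, hq⟩ p q rfl).2 (hd.2 ⟨q, hq⟩)
    · intro _ _ _ _ _ heq; cases heq
  -- StratD.stableFinish
  · intro p u e e' hm _ _
    refine ⟨?_, ?_, ?_, ?_⟩
    · intro _ _ heq; cases heq
    · intro _ _ heq; cases heq
    · intro p0 Q0 heq hstab
      cases heq
      refine ⟨⟨hstab, fun x => x.elim⟩, ?_, ?_⟩
      · intro q hq hd
        exact hq hd.1
      · intro q hq
        exact absurd hq (Set.notMem_empty q)
    · intro _ _ _ _ _ heq; cases heq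
  -- StratD.branchConj
  · intro p p' α Q Qa Q' ua ua' e e1 ea φa us es ψs hmObs hmAcc _ _ _ hsF hms _ _ _ IHF IHs
    refine ⟨?_, ?_, ?_, ?_⟩
    · intro _ _ heq; cases heq
    · intro _ _ heq; cases heq
    · intro _ _ heq; cases heq
    · intro p0 α0 p0' Q0 Qa0 heq hopt
      cases heq
      cases hmObs with
      | branchObservation hQ' =>
        obtain ⟨h1, h2⟩ := IHF p' Q' rfl
        refine ⟨⟨⟨p', hopt, h1⟩, fun qq => (IHs qq p qq.1 rfl).1⟩, ?_, ?_⟩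
        · intro q hq hd
          exact (IHs ⟨q, hq⟩ p q rfl).2 (hd.2 ⟨q, hq⟩)
        · intro q hq hd
          obtain ⟨⟨q', hs, hsat⟩, _⟩ := hd
          exact h2 q' (hQ' ▸ ⟨q, hq, hs⟩) hsat
  -- StratC.pos
  · intro p q Q' u e e' χ hm _ _ _ IH p0 q0 heq
    cases heq
    cases hm with
    | posConjunct hQ' =>
      obtain ⟨⟨p'', h1, h2⟩, hneg⟩ := IH.1 p Q' rfl (setStar_closed hQ')
      constructor
      · exact ⟨p'', h1, h2⟩
      · rintro ⟨q', hs, hd⟩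
        exact hneg q' (hQ' ▸ ⟨q, rfl, hs⟩) hd
    | negConjunct hP' hne => exact absurd rfl hne
  -- StratC.neg
  · intro p q P' u e e' χ hm _ _ _ IH p0 q0 heq
    cases heq
    cases hm with
    | posConjunct hQ' =>
      obtain ⟨⟨q'', h1, h2⟩, hneg⟩ := IH.1 _ P' rfl (setStar_closed hQ')
      constructor
      · rintro ⟨p'', hs, hd⟩
        exact hneg p'' (hQ' ▸ ⟨_, rfl, hs⟩) hd
      · intro hc
        exact hc ⟨q'', h1, h2⟩
    | negConjunct hP' hne =>
      obtain ⟨⟨q'', h1, h2⟩, hneg⟩ := IH.1 q P' rfl (setStar_closed hP')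
      constructor
      · rintro ⟨p'', hs, hd⟩
        exact hneg p'' (hP' ▸ ⟨p, rfl, hs⟩) hd
      · intro hc
        exact hc ⟨q'', h1, h2⟩

end Correctness

/-- strategy branching conjunctions at `(p,α,p',Q∖Qa,Qa)^η_d`
distinguish `p` from `Q` w.r.t. `⟦·⟧^ε`, given `p →(α) p'` and `Qa ⊆ Q`. -/
theorem strategy_formula_distinguishes_branching {Proc Act : Type}
    (Tr : Proc → Act → Proc → Prop) (τ : Act)
    (p p' : Proc) (α : Act) (Q Qa : Set Proc) (e : Energy)
    (φ' : Formula Act τ) (I : Type) (ps : I → Conjunct Act τ)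
    (h : StratD Tr τ (.defB p α p' (Q \ Qa) Qa) e (DFormula.branchConj α φ' I ps))
    (hstep : OptStep Tr τ p α p') (hsub : Qa ⊆ Q) :
    DistinguishesD Tr τ (DFormula.branchConj α φ' I ps) p Q := by
  obtain ⟨hsat, hQmin, hQa⟩ :=
    (strat_correct h).2.2.2 p α p' (Q \ Qa) Qa rfl hstep
  refine ⟨hsat, ?_⟩
  intro q hq hd
  by_cases hqa : q ∈ Qa
  · exact hQa q hqa hd
  · exact hQmin q ⟨hq, hqa⟩ hd

end Spectroscopy
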